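/- arXiv:1512.03786 — 2 statements merged into one kernel-verified Lean document; each statement's English description precedes it below -/
import Mathlib

section
/- Let N ≥ 1 and m ≥ 1 be natural numbers. For each j ∈ {1,…,N} let tⱼ ∈ ℂ with tⱼ ≠ 1, sⱼ ∈ ℂ with sⱼ ≠ 0, and cⱼ : Fin m → ℂ, and let Xⱼ be the (m+2)×(m+2) block matrix [[I_m, Qⱼ], [O, A₂(tⱼ,sⱼ)]], where Qⱼ is the m×2 matrix whose i-th row is (cⱼ(i), −sⱼ·cⱼ(i)/(1−tⱼ)). Then each Xⱼ is invertible, and there exists a group homomorphism φ : Γ_N² → GL_{m+2}(ℂ) such that φ(xⱼ) = Xⱼ for every j = 1,…,N. -/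
/-- The matrix `A₂(a,b) = [[a, b], [(1−a²)/b, −a]]`. -/
noncomputable def A2 (a b : ℂ) : Matrix (Fin 2) (Fin 2) ℂ :=
  !![a, b; (1 - a ^ 2) / b, -a]

/-- The relations of the presented group `Γ_N²`: the squares of the generators. -/
def GammaRels (N : ℕ) : Set (FreeGroup (Fin N)) :=
  { r | ∃ j : Fin N, r = FreeGroup.of j ^ 2 }

/-- The presented group `Γ_N² = ⟨x₁,…,x_N ∣ x₁² = ⋯ = x_N² = e⟩`. -/
abbrev Gamma (N : ℕ) : Type := PresentedGroup (GammaRels N)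

/-!
Each `Xⱼ` is an involution, so the generators `xⱼ ↦ Xⱼ` respect the relations `xⱼ² = e`.
For the block upper-triangular `Xⱼ`, squaring to `1` amounts to `A₂(tⱼ,sⱼ)² = 1`, which holds for
every `A₂(a,b)` (trace `0`, determinant `-1`), and `Qⱼ + Qⱼ A₂(tⱼ,sⱼ) = 0`: the rows of `Qⱼ` are
multiples of `(1, -b/(1-a))`, a left eigenvector of `A₂(a,b)` for the eigenvalue `-1`.
-/

def Gamma.lift {N : ℕ} {G : Type*} [Group G] (g : Fin N → G) (hg : ∀ j, g j * g j = 1) :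
    Gamma N →* G :=
  PresentedGroup.toGroup (rels := GammaRels N) (f := g) <| by
    rintro r ⟨j, rfl⟩
    rw [map_pow, FreeGroup.lift_apply_of, sq, hg]

theorem Gamma.lift_of {N : ℕ} {G : Type*} [Group G] (g : Fin N → G) (hg : ∀ j, g j * g j = 1)
    (j : Fin N) : Gamma.lift g hg (PresentedGroup.of j) = g j :=
  PresentedGroup.toGroup.of _

def Units.ofMulSelfEqOne {M : Type*} [Monoid M] (x : M) (hx : x * x = 1) : Mˣ :=
  ⟨x, x, hx, hx⟩

theorem Units.ofMulSelfEqOne_mul_self {M : Type*} [Monoid M] (x : M) (hx : x * x = 1) :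
    Units.ofMulSelfEqOne x hx * Units.ofMulSelfEqOne x hx = 1 :=
  Units.ext hx

theorem A2_mul_self {a b : ℂ} (hb : b ≠ 0) : A2 a b * A2 a b = 1 := by
  ext i k
  fin_cases i <;> fin_cases k <;> simp [A2, Matrix.mul_apply] <;> field_simp <;> ring

theorem eigenrows_mul_A2 {ι : Type*} {a b : ℂ} (ha : a ≠ 1) (hb : b ≠ 0) (x : ι → ℂ) :
    Matrix.of (fun i => ![x i, -b * x i / (1 - a)]) * A2 a b =
      -Matrix.of (fun i => ![x i, -b * x i / (1 - a)]) := by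
  have h1a : (1 : ℂ) - a ≠ 0 := sub_ne_zero.mpr ha.symm
  ext i k
  fin_cases k <;> simp [A2, Matrix.mul_apply, Fin.sum_univ_two] <;> field_simp <;> ring

theorem Matrix.fromBlocks_one_mul_self {l n R : Type*} [Fintype l] [Fintype n] [DecidableEq l]
    [DecidableEq n] [Ring R] {Q : Matrix l n R} {A : Matrix n n R} (hA : A * A = 1)
    (hQ : Q * A = -Q) :
    fromBlocks (1 : Matrix l l R) Q 0 A * fromBlocks (1 : Matrix l l R) Q 0 A = 1 := by
  rw [fromBlocks_multiply, ← fromBlocks_one]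
  simp [hA, hQ]

theorem exists_hom_Gamma_to_GL_general (N m : ℕ)
    (t s : Fin N → ℂ) (ht : ∀ j, t j ≠ 1) (hs : ∀ j, s j ≠ 0)
    (c : Fin N → Fin m → ℂ)
    (X : Fin N → Matrix (Fin m ⊕ Fin 2) (Fin m ⊕ Fin 2) ℂ)
    (hX : ∀ j, X j = Matrix.fromBlocks (1 : Matrix (Fin m) (Fin m) ℂ)
        (Matrix.of fun i => ![c j i, -(s j) * c j i / (1 - t j)])
        (0 : Matrix (Fin 2) (Fin m) ℂ) (A2 (t j) (s j))) :
    (∀ j, IsUnit (X j)) ∧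
      ∃ φ : Gamma N →* (Matrix (Fin m ⊕ Fin 2) (Fin m ⊕ Fin 2) ℂ)ˣ,
        ∀ j : Fin N,
          (φ (PresentedGroup.of (rels := GammaRels N) j) :
            Matrix (Fin m ⊕ Fin 2) (Fin m ⊕ Fin 2) ℂ) = X j := by
  have hX_sq : ∀ j, X j * X j = 1 := fun j => by
    rw [hX j]
    exact Matrix.fromBlocks_one_mul_self (A2_mul_self (hs j)) (eigenrows_mul_A2 (ht j) (hs j) _)
  let u j := Units.ofMulSelfEqOne (X j) (hX_sq j)
  exact ⟨fun j => (u j).isUnit, Gamma.lift u (fun j => Units.ofMulSelfEqOne_mul_self _ _),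
    fun j => congrArg Units.val (Gamma.lift_of _ _ j)⟩

theorem exists_hom_Gamma_to_GL (N m : ℕ) (hN : 1 ≤ N) (hm : 1 ≤ m)
    (t s : Fin N → ℂ) (ht : ∀ j, t j ≠ 1) (hs : ∀ j, s j ≠ 0)
    (c : Fin N → Fin m → ℂ)
    (X : Fin N → Matrix (Fin m ⊕ Fin 2) (Fin m ⊕ Fin 2) ℂ)
    (hX : ∀ j, X j = Matrix.fromBlocks (1 : Matrix (Fin m) (Fin m) ℂ)
        (Matrix.of fun i => ![c j i, -(s j) * c j i / (1 - t j)])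
        (0 : Matrix (Fin 2) (Fin m) ℂ) (A2 (t j) (s j))) :
    (∀ j, IsUnit (X j)) ∧
      ∃ φ : Gamma N →* (Matrix (Fin m ⊕ Fin 2) (Fin m ⊕ Fin 2) ℂ)ˣ,
        ∀ j : Fin N,
          (φ (PresentedGroup.of (rels := GammaRels N) j) :
            Matrix (Fin m ⊕ Fin 2) (Fin m ⊕ Fin 2) ℂ) = X j :=
  exists_hom_Gamma_to_GL_general N m t s ht hs c X hX
end

section
/- With X₁, X₂ and ε₀ as in the context, for every n ≥ 1 one has (X₁X₂)ⁿ + (X₂X₁)ⁿ = fₙ(ε₀)·I₂, where fₙ(z) = Σ_{k=0}^{⌊n/2⌋} (−1)ᵏ · (n/(n−k)) · C(n−k, k) · z^{n−2k} and C(·,·) denotes the binomial coefficient (note n − k > 0 for all 0 ≤ k ≤ ⌊n/2⌋ when n ≥ 1). -/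
/-- The matrix `X = [[t, s], [(1−t²)/s, −t]]`. -/
noncomputable def Xmat (t s : ℂ) : Matrix (Fin 2) (Fin 2) ℂ :=
  !![t, s; (1 - t ^ 2) / s, -t]

/-- The scalar `ε₀ = 2t₁t₂ + s₁(1−t₂²)/s₂ + s₂(1−t₁²)/s₁`. -/
noncomputable def eps (t₁ s₁ t₂ s₂ : ℂ) : ℂ :=
  2 * t₁ * t₂ + s₁ * (1 - t₂ ^ 2) / s₂ + s₂ * (1 - t₁ ^ 2) / s₁

/-- The polynomial `fₙ(z) = Σ_{k=0}^{⌊n/2⌋} (−1)ᵏ (n/(n−k)) C(n−k, k) z^{n−2k}`. -/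
noncomputable def f (n : ℕ) (z : ℂ) : ℂ :=
  ∑ k ∈ Finset.range (n / 2 + 1),
    (-1 : ℂ) ^ k * ((n : ℂ) / ((n - k : ℕ) : ℂ)) * ((n - k).choose k : ℂ) * z ^ (n - 2 * k)


/-!
Since `X₁² = X₂² = 1`, the matrices `A = X₁X₂` and `B = X₂X₁` are mutually inverse, and a direct
computation gives `A + B = ε₀ • 1`. Hence `Aⁿ + Bⁿ = Dₙ(ε₀) • 1` for the Dickson polynomials
`Dₙ = dickson 1 1 n`, which satisfy `Dₙ₊₂ = X Dₙ₊₁ - Dₙ`. The coefficients of `fₙ` satisfy the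
matching three-term recurrence (a consequence of Pascal's rule), so `fₙ = Dₙ` for `n ≥ 1`.
-/

open Polynomial Finset Matrix

theorem pow_add_pow_eq_algebraMap_eval_dickson {S R : Type*} [CommRing S] [Ring R] [Algebra S R]
    {x y : R} (hxy : x * y = 1) (hyx : y * x = 1) {e : S} (he : x + y = algebraMap S R e) :
    ∀ n, x ^ n + y ^ n = algebraMap S R ((dickson 1 (1 : S) n).eval e)
  | 0 => by norm_num [map_ofNat]
  | 1 => by simpa using he
  | n + 2 => by
    have hx : x * y ^ (n + 1) = y ^ n := by rw [pow_succ', ← mul_assoc, hxy, one_mul]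
    have hy : y * x ^ (n + 1) = x ^ n := by rw [pow_succ', ← mul_assoc, hyx, one_mul]
    rw [dickson_add_two, eval_sub, eval_mul, eval_X, eval_mul, eval_C, one_mul, map_sub, map_mul,
      ← he, ← pow_add_pow_eq_algebraMap_eval_dickson hxy hyx he (n + 1),
      ← pow_add_pow_eq_algebraMap_eval_dickson hxy hyx he n, add_mul, mul_add, mul_add,
      ← pow_succ', ← pow_succ', hx, hy]
    abel

theorem Nat.cast_add_one_mul_choose_succ {K : Type*} [CommRing K] (m k : ℕ) :
    ((k : K) + 1) * (m.choose (k + 1) : K) = ((m : K) - k) * (m.choose k : K) := by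
  rcases le_or_gt k m with hkm | hmk
  · have h := congrArg (Nat.cast : ℕ → K) (Nat.choose_succ_right_eq m k)
    push_cast [Nat.cast_sub hkm] at h
    linear_combination h
  · simp [Nat.choose_eq_zero_of_lt hmk, Nat.choose_eq_zero_of_lt (Nat.lt_succ_of_lt hmk)]

noncomputable def lucasCoeff (n k : ℕ) : ℂ :=
  (-1 : ℂ) ^ k * ((n : ℂ) / ((n - k : ℕ) : ℂ)) * ((n - k).choose k : ℂ)

theorem f_eq_sum_lucasCoeff {n N : ℕ} (hN : n / 2 < N) (z : ℂ) :
    f n z = ∑ k ∈ range N, lucasCoeff n k * z ^ (n - 2 * k) := by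
  refine sum_subset (range_subset_range.mpr hN) fun k _ hk => ?_
  have : (n - k).choose k = 0 := Nat.choose_eq_zero_of_lt (by rw [mem_range] at hk; omega)
  simp [this]

theorem lucasCoeff_eq_zero {n k : ℕ} (h : n < 2 * k) : lucasCoeff n k = 0 := by
  simp [lucasCoeff, Nat.choose_eq_zero_of_lt (show n - k < k by omega)]

theorem lucasCoeff_zero {n : ℕ} (hn : n ≠ 0) : lucasCoeff n 0 = 1 := by
  simp [lucasCoeff, hn]

theorem lucasCoeff_add_two_succ {n : ℕ} (hn : n ≠ 0) (k : ℕ) :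
    lucasCoeff (n + 2) (k + 1) = lucasCoeff (n + 1) (k + 1) - lucasCoeff n k := by
  rcases lt_or_ge k n with hkn | hnk
  · obtain ⟨m, rfl⟩ : ∃ m, n = k + m + 1 := ⟨n - k - 1, by omega⟩
    simp only [lucasCoeff, show k + m + 1 + 2 - (k + 1) = m + 2 by omega,
      show k + m + 1 + 1 - (k + 1) = m + 1 by omega, show k + m + 1 - k = m + 1 by omega,
      Nat.choose_succ_succ' (m + 1) k]
    have := Nat.cast_add_one_mul_choose_succ (K := ℂ) (m + 1) k
    have hm1 : (m : ℂ) + 1 ≠ 0 := by exact_mod_cast m.succ_ne_zero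
    have hm2 : (m : ℂ) + 2 ≠ 0 := by exact_mod_cast (m + 1).succ_ne_zero
    push_cast at this ⊢
    field_simp
    linear_combination (-1 : ℂ) ^ k * this
  · rw [lucasCoeff_eq_zero (by omega), lucasCoeff_eq_zero (by omega), lucasCoeff_eq_zero (by omega),
      sub_zero]

theorem mul_lucasCoeff_mul_pow (n k : ℕ) (z : ℂ) :
    z * (lucasCoeff (n + 1) (k + 1) * z ^ (n + 1 - 2 * (k + 1))) =
      lucasCoeff (n + 1) (k + 1) * z ^ (n - 2 * k) := by
  rcases lt_or_ge n (2 * k + 1) with h | h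
  · simp [lucasCoeff_eq_zero (show n + 1 < 2 * (k + 1) by omega)]
  · rw [show n - 2 * k = n + 1 - 2 * (k + 1) + 1 by omega, pow_succ]
    ring

theorem f_add_two {n : ℕ} (hn : n ≠ 0) (z : ℂ) : f (n + 2) z = z * f (n + 1) z - f n z := by
  rw [f_eq_sum_lucasCoeff (N := n + 2) (by omega), f_eq_sum_lucasCoeff (N := n + 2) (by omega),
    f_eq_sum_lucasCoeff (N := n + 1) (by omega),
    sum_range_succ' (fun k => lucasCoeff (n + 2) k * z ^ (n + 2 - 2 * k)),
    sum_range_succ' (fun k => lucasCoeff (n + 1) k * z ^ (n + 1 - 2 * k)), mul_add,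
    mul_sum, lucasCoeff_zero (by omega), lucasCoeff_zero (by omega)]
  have hterm : ∀ k ∈ range (n + 1), lucasCoeff (n + 2) (k + 1) * z ^ (n + 2 - 2 * (k + 1)) =
      z * (lucasCoeff (n + 1) (k + 1) * z ^ (n + 1 - 2 * (k + 1))) -
        lucasCoeff n k * z ^ (n - 2 * k) := fun k _ => by
    rw [mul_lucasCoeff_mul_pow, lucasCoeff_add_two_succ hn,
      show n + 2 - 2 * (k + 1) = n - 2 * k by omega]
    ring
  rw [sum_congr rfl hterm, sum_sub_distrib, Nat.mul_zero, Nat.sub_zero, Nat.sub_zero]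
  ring

/-- The shift `n + 1` is forced: `f 0 z = 0` (its only term has the junk factor `0 / 0`), while
`dickson 1 1 0 = 2`. -/
theorem f_eq_eval_dickson (z : ℂ) : ∀ n, f (n + 1) z = (dickson 1 (1 : ℂ) (n + 1)).eval z
  | 0 => by simp [f]
  | 1 => by norm_num [f, sum_range_succ, dickson_two, ← sub_eq_add_neg, sq]
  | n + 2 => by
    rw [f_add_two n.succ_ne_zero, dickson_add_two, f_eq_eval_dickson z (n + 1),
      f_eq_eval_dickson z n]
    simp

theorem Xmat_mul_self {t s : ℂ} (hs : s ≠ 0) : Xmat t s * Xmat t s = 1 := by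
  rw [Xmat, mul_fin_two, one_fin_two]
  ext i j
  fin_cases i <;> fin_cases j <;> simp <;> field_simp <;> ring

theorem Xmat_mul_add_mul_comm {t₁ s₁ t₂ s₂ : ℂ} (hs₁ : s₁ ≠ 0) (hs₂ : s₂ ≠ 0) :
    Xmat t₁ s₁ * Xmat t₂ s₂ + Xmat t₂ s₂ * Xmat t₁ s₁ = eps t₁ s₁ t₂ s₂ • 1 := by
  rw [Xmat, Xmat, mul_fin_two, mul_fin_two, one_fin_two, eps]
  ext i j
  fin_cases i <;> fin_cases j
  all_goals simp
  all_goals field_simp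
  all_goals ring

theorem pow_sum_eq_f_smul_one (t₁ s₁ t₂ s₂ : ℂ) (hs₁ : s₁ ≠ 0) (hs₂ : s₂ ≠ 0) :
    ∀ n : ℕ, 1 ≤ n →
      (Xmat t₁ s₁ * Xmat t₂ s₂) ^ n + (Xmat t₂ s₂ * Xmat t₁ s₁) ^ n =
        f n (eps t₁ s₁ t₂ s₂) • (1 : Matrix (Fin 2) (Fin 2) ℂ) := by
  intro n hn
  obtain ⟨m, rfl⟩ := Nat.exists_eq_add_of_le' hn
  have h₁ : Xmat t₁ s₁ * Xmat t₁ s₁ = 1 := Xmat_mul_self hs₁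
  have h₂ : Xmat t₂ s₂ * Xmat t₂ s₂ = 1 := Xmat_mul_self hs₂
  have hAB : Xmat t₁ s₁ * Xmat t₂ s₂ * (Xmat t₂ s₂ * Xmat t₁ s₁) = 1 := by
    rw [mul_assoc, ← mul_assoc (Xmat t₂ s₂), h₂, one_mul, h₁]
  have hBA : Xmat t₂ s₂ * Xmat t₁ s₁ * (Xmat t₁ s₁ * Xmat t₂ s₂) = 1 := by
    rw [mul_assoc, ← mul_assoc (Xmat t₁ s₁), h₁, one_mul, h₂]
  have hsum := Xmat_mul_add_mul_comm (t₁ := t₁) (t₂ := t₂) hs₁ hs₂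
  rw [← Algebra.algebraMap_eq_smul_one] at hsum
  rw [f_eq_eval_dickson, ← Algebra.algebraMap_eq_smul_one]
  exact pow_add_pow_eq_algebraMap_eval_dickson hAB hBA hsum (m + 1)
end
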